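/- Let α > 0, 0 < α/p < 1, f : ℝ → ℝ Hölder continuous of exponent δ for all δ ∈ [0, δ₀] with 0 < δ₀ < 1 - α/p, and define for t > 0, x ≠ 0: S(t,x) = t^{-α/((α+1)p)} · (sgn(x/t^{1/(α+1)})/|x/t^{1/(α+1)}|^{α/p}) ∫_{|x|/t^{1/(α+1)}}^{∞} σ^{-2+α/p} ( f(x/t^{1/(α+1)}) - f(σ sgn(x)) ) dσ. Then |S(t,x)| ≤ C t^{(1/(α+1))(1 - α/p - δ)} |x|^{δ-1} for every δ ∈ [0, δ₀], and consequently ‖S(t,·)‖_{L^r(ℝ)} ≤ C t^{c(r)} with c(r) > 0 for r > 1 close enough to 1. -/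

import Mathlib

open MeasureTheory

open MeasureTheory in
private lemma intAux {s1 s2 : ℝ} (h1 : -1 < s1) (h2 : s2 < -1) :
    Integrable (fun x : ℝ => if |x| ≤ 1 then |x| ^ s1 else |x| ^ s2) volume := by
  set F : ℝ → ℝ := fun x => if |x| ≤ 1 then |x| ^ s1 else |x| ^ s2 with hF
  have hIci : IntegrableOn F (Set.Ici 0) := by
    have i1 : IntegrableOn (fun x : ℝ => x ^ s1) (Set.Ioc 0 1) := by
      have := intervalIntegral.intervalIntegrable_rpow' (a := 0) (b := 1) h1
      rwa [intervalIntegrable_iff_integrableOn_Ioc_of_le zero_le_one] at this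
    have i1' : IntegrableOn F (Set.Icc 0 1) := by
      rw [integrableOn_Icc_iff_integrableOn_Ioc]
      refine i1.congr_fun (fun x hx => ?_) measurableSet_Ioc
      simp only [hF, abs_of_pos hx.1, if_pos hx.2]
    have i2 : IntegrableOn F (Set.Ioi 1) := by
      refine (integrableOn_Ioi_rpow_of_lt h2 one_pos).congr_fun (fun x hx => ?_) measurableSet_Ioi
      have hx1 : (1:ℝ) < x := hx
      simp only [hF, abs_of_pos (lt_trans one_pos hx1), if_neg (not_le.mpr hx1)]
    exact (i1'.union i2).mono_set (fun x hx => (le_or_gt x 1).imp (fun h => ⟨hx, h⟩) id)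
  have hIic : IntegrableOn F (Set.Iic 0) := by
    have A : MeasurableEmbedding (fun x : ℝ => -x) :=
      (Homeomorph.neg ℝ).isClosedEmbedding.measurableEmbedding
    have hmap : (volume : Measure ℝ).restrict (Set.Iic 0) =
        Measure.map (fun x : ℝ => -x) ((volume : Measure ℝ).restrict (Set.Ici 0)) := by
      conv_lhs => rw [← Measure.map_neg_eq_self (volume : Measure ℝ)]
      rw [Measure.restrict_map A.measurable measurableSet_Iic]
      congr 1
      ext x
      simp
    rw [IntegrableOn, hmap, A.integrable_map_iff]
    have hFeq : (F ∘ fun x : ℝ => -x) = F := by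
      funext x; simp only [Function.comp_apply, hF, abs_neg]
    rwa [hFeq]
  rw [← integrableOn_univ, ← Set.Iic_union_Ici (a := (0:ℝ))]
  exact hIic.union hIci


/-- bounds for S(t,x) = t^{-α/((α+1)p)} R(x/t^{1/(α+1)}). -/
theorem stmt16 (α p : ℝ) (hα : 0 < α) (ha0 : 0 < α / p) (ha1 : α / p < 1)
    (δ₀ : ℝ) (hδ₀ : 0 < δ₀) (hδ₀' : δ₀ < 1 - α / p) (f : ℝ → ℝ) (K : ℝ)
    (hf : ∀ δ : ℝ, 0 ≤ δ → δ ≤ δ₀ → ∀ x y : ℝ, |f x - f y| ≤ K * |x - y| ^ δ)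
    (S : ℝ → ℝ → ℝ)
    (hS : ∀ t x, S t x = t ^ (-(α / ((α + 1) * p))) *
      (Real.sign (x / t ^ (1 / (α + 1))) / |x / t ^ (1 / (α + 1))| ^ (α / p)) *
      ∫ σ in Set.Ioi (|x| / t ^ (1 / (α + 1))),
        σ ^ (-2 + α / p) * (f (x / t ^ (1 / (α + 1))) - f (σ * Real.sign x))) :
    (∃ C : ℝ, ∀ δ : ℝ, 0 ≤ δ → δ ≤ δ₀ → ∀ t : ℝ, 0 < t → ∀ x : ℝ, x ≠ 0 →
        |S t x| ≤ C * t ^ ((1 / (α + 1)) * (1 - α / p - δ)) * |x| ^ (δ - 1)) ∧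
    (∃ r₀ : ℝ, 1 < r₀ ∧ ∀ r : ℝ, 1 < r → r < r₀ → ∃ C c : ℝ, 0 < c ∧
      ∀ t : ℝ, 0 < t → t ≤ 1 →
        eLpNorm (S t) (ENNReal.ofReal r) volume ≤ ENNReal.ofReal (C * t ^ c)) := by
  have hp : 0 < p := by
    rcases lt_trichotomy p 0 with h | h | h
    · exfalso; have := div_neg_of_pos_of_neg hα h; linarith
    · exfalso; rw [h] at ha0; simp at ha0
    · exact h
  have hα1 : (0:ℝ) < α + 1 := by linarith
  have hK : 0 ≤ K := by have := hf 0 le_rfl hδ₀.le 0 0; simpa using this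
  have hD₀ : 0 < 1 - α / p - δ₀ := by linarith
  set C₁ : ℝ := K / (1 - α / p - δ₀) with hC₁def
  have hC₁ : 0 ≤ C₁ := div_nonneg hK hD₀.le
  have key : ∀ δ : ℝ, 0 ≤ δ → δ ≤ δ₀ → ∀ t : ℝ, 0 < t → ∀ x : ℝ, x ≠ 0 →
      |S t x| ≤ C₁ * t ^ ((1 / (α + 1)) * (1 - α / p - δ)) * |x| ^ (δ - 1) := by
    intro δ hδ0 hδ1 t ht x hx
    have hD : 0 < 1 - α / p - δ := by linarith
    have hτ : 0 < t ^ (1 / (α + 1)) := Real.rpow_pos_of_pos ht _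
    have hxabs : 0 < |x| := abs_pos.mpr hx
    have ha : 0 < |x| / t ^ (1 / (α + 1)) := div_pos hxabs hτ
    set τ : ℝ := t ^ (1 / (α + 1)) with hτdef
    set a : ℝ := |x| / τ with hadef
    have hsgnx : Real.sign x * |x| = x := by
      rcases hx.lt_or_gt with h | h
      · rw [Real.sign_of_neg h, abs_of_neg h]; ring
      · rw [Real.sign_of_pos h, abs_of_pos h]; ring
    have hy : x / τ = Real.sign x * a := by
      rw [hadef, ← mul_div_assoc, hsgnx]
    have hsgn : |Real.sign x| = 1 := by
      rcases hx.lt_or_gt with h | h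
      · rw [Real.sign_of_neg h]; simp
      · rw [Real.sign_of_pos h]; simp
    have he : -2 + α / p + δ < -1 := by linarith
    have hint : IntegrableOn (fun σ : ℝ => K * σ ^ (-2 + α / p + δ)) (Set.Ioi a) :=
      (integrableOn_Ioi_rpow_of_lt he ha).const_mul K
    have hbound : ∀ᵐ σ ∂(volume.restrict (Set.Ioi a)),
        ‖σ ^ (-2 + α / p) * (f (x / τ) - f (σ * Real.sign x))‖ ≤ K * σ ^ (-2 + α / p + δ) := by
      filter_upwards [ae_restrict_mem measurableSet_Ioi] with σ hσ
      have hσa : a < σ := hσ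
      have hσ0 : 0 < σ := ha.trans hσa
      rw [Real.norm_eq_abs, abs_mul, abs_of_nonneg (Real.rpow_nonneg hσ0.le _)]
      calc σ ^ (-2 + α / p) * |f (x / τ) - f (σ * Real.sign x)|
          ≤ σ ^ (-2 + α / p) * (K * σ ^ δ) := by
            refine mul_le_mul_of_nonneg_left ?_ (Real.rpow_nonneg hσ0.le _)
            refine (hf δ hδ0 hδ1 _ _).trans ?_
            refine mul_le_mul_of_nonneg_left ?_ hK
            refine Real.rpow_le_rpow (abs_nonneg _) ?_ hδ0
            rw [hy, show Real.sign x * a - σ * Real.sign x = Real.sign x * (a - σ) by ring,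
              abs_mul, hsgn, one_mul, abs_of_nonpos (by linarith)]
            linarith
        _ = K * σ ^ (-2 + α / p + δ) := by
            rw [Real.rpow_add hσ0 (-2 + α / p) δ]; ring
    have hIle : |∫ σ in Set.Ioi a, σ ^ (-2 + α / p) * (f (x / τ) - f (σ * Real.sign x))|
        ≤ K * (a ^ (-(1 - α / p - δ)) / (1 - α / p - δ)) := by
      have h1 := norm_integral_le_of_norm_le hint hbound
      rw [Real.norm_eq_abs] at h1
      refine h1.trans_eq ?_
      rw [integral_const_mul, integral_Ioi_rpow_of_lt he ha,
        show -2 + α / p + δ + 1 = -(1 - α / p - δ) by ring, neg_div_neg_eq]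
    have hsgny : |Real.sign (x / τ)| = 1 := by
      have hxy : x / τ ≠ 0 := div_ne_zero hx hτ.ne'
      rcases hxy.lt_or_gt with h | h
      · rw [Real.sign_of_neg h]; simp
      · rw [Real.sign_of_pos h]; simp
    have habsy : |x / τ| = a := by rw [abs_div, abs_of_pos hτ]
    have hSeq : |S t x| = t ^ (-(α / ((α + 1) * p))) * (1 / a ^ (α / p)) *
        |∫ σ in Set.Ioi a, σ ^ (-2 + α / p) * (f (x / τ) - f (σ * Real.sign x))| := by
      rw [hS t x, ← hτdef, ← hadef, abs_mul, abs_mul,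
        abs_of_nonneg (Real.rpow_nonneg ht.le _), abs_div, hsgny, habsy,
        abs_of_nonneg (Real.rpow_nonneg ha.le _)]
    have hA : (1 / a ^ (α / p)) * a ^ (-(1 - α / p - δ)) = a ^ (δ - 1) := by
      rw [one_div, ← Real.rpow_neg ha.le, ← Real.rpow_add ha]; congr 1; ring
    have hB : a ^ (δ - 1) = |x| ^ (δ - 1) * t ^ (-(1 / (α + 1) * (δ - 1))) := by
      rw [hadef, Real.div_rpow (abs_nonneg x) hτ.le, hτdef, ← Real.rpow_mul ht.le,
        div_eq_mul_inv, ← Real.rpow_neg ht.le]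
    have hC : t ^ (-(α / ((α + 1) * p))) * t ^ (-(1 / (α + 1) * (δ - 1))) =
        t ^ (1 / (α + 1) * (1 - α / p - δ)) := by
      rw [← Real.rpow_add ht]; congr 1; field_simp; ring
    calc |S t x| = t ^ (-(α / ((α + 1) * p))) * (1 / a ^ (α / p)) *
          |∫ σ in Set.Ioi a, σ ^ (-2 + α / p) * (f (x / τ) - f (σ * Real.sign x))| := hSeq
      _ ≤ t ^ (-(α / ((α + 1) * p))) * (1 / a ^ (α / p)) *
          (K * (a ^ (-(1 - α / p - δ)) / (1 - α / p - δ))) := by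
          refine mul_le_mul_of_nonneg_left hIle ?_
          positivity
      _ = (K / (1 - α / p - δ)) *
          (t ^ (1 / (α + 1) * (1 - α / p - δ)) * |x| ^ (δ - 1)) := by
          rw [show t ^ (-(α / ((α + 1) * p))) * (1 / a ^ (α / p)) *
              (K * (a ^ (-(1 - α / p - δ)) / (1 - α / p - δ))) =
              (K / (1 - α / p - δ)) *
              (t ^ (-(α / ((α + 1) * p))) * ((1 / a ^ (α / p)) * a ^ (-(1 - α / p - δ)))) by ring,
            hA, hB, show t ^ (-(α / ((α + 1) * p))) * (|x| ^ (δ - 1) * t ^ (-(1 / (α + 1) * (δ - 1)))) =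
              (t ^ (-(α / ((α + 1) * p))) * t ^ (-(1 / (α + 1) * (δ - 1)))) * |x| ^ (δ - 1) by ring,
            hC]
      _ ≤ C₁ * t ^ (1 / (α + 1) * (1 - α / p - δ)) * |x| ^ (δ - 1) := by
          rw [mul_assoc]
          refine mul_le_mul_of_nonneg_right ?_ (by positivity)
          rw [hC₁def, div_le_div_iff₀ hD hD₀]
          exact mul_le_mul_of_nonneg_left (by linarith) hK
  refine ⟨⟨C₁, key⟩, (1 - δ₀)⁻¹, ?_, ?_⟩
  · have hδ₀1 : δ₀ < 1 := by linarith
    rw [lt_inv_comm₀ (by norm_num) (by linarith)]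
    · linarith
  intro r hr1 hr2
  have hδ₀1 : δ₀ < 1 := by linarith
  have h1δ₀ : 0 < 1 - δ₀ := by linarith
  have hrδ : r * (1 - δ₀) < 1 := by
    rw [inv_eq_one_div, lt_div_iff₀ h1δ₀] at hr2; exact hr2
  have hs1 : -1 < (δ₀ - 1) * r := by nlinarith
  have hs2 : -r < -1 := by linarith
  set c : ℝ := 1 / (α + 1) * (1 - α / p - δ₀) with hcdef
  have hc : 0 < c := mul_pos (by positivity) hD₀
  set g : ℝ → ℝ := fun x => if |x| ≤ 1 then |x| ^ (δ₀ - 1) else |x| ^ (-1 : ℝ) with hgdef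
  have hgm : Measurable g := by
    apply Measurable.ite (measurableSet_le measurable_abs measurable_const) <;> fun_prop
  have hq0 : (ENNReal.ofReal r) ≠ 0 := by
    simp only [ne_eq, ENNReal.ofReal_eq_zero, not_le]; linarith
  have hqt : (ENNReal.ofReal r) ≠ ⊤ := ENNReal.ofReal_ne_top
  have hqr : (ENNReal.ofReal r).toReal = r := ENNReal.toReal_ofReal (by linarith)
  have hmem : MemLp g (ENNReal.ofReal r) volume := by
    rw [← memLp_norm_rpow_iff (q := ENNReal.ofReal r) hgm.aestronglyMeasurable hq0 hqt,
      ENNReal.div_self hq0 hqt, memLp_one_iff_integrable]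
    have heq : (fun x => ‖g x‖ ^ (ENNReal.ofReal r).toReal) =
        fun x : ℝ => if |x| ≤ 1 then |x| ^ ((δ₀ - 1) * r) else |x| ^ (-r) := by
      funext x
      rw [hqr, Real.norm_eq_abs]
      by_cases hx1 : |x| ≤ 1
      · simp only [hgdef, if_pos hx1]
        rw [abs_of_nonneg (Real.rpow_nonneg (abs_nonneg x) _), ← Real.rpow_mul (abs_nonneg x)]
      · simp only [hgdef, if_neg hx1]
        rw [abs_of_nonneg (Real.rpow_nonneg (abs_nonneg x) _), ← Real.rpow_mul (abs_nonneg x)]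
        norm_num
    rw [heq]
    exact intAux hs1 hs2
  refine ⟨C₁ * (eLpNorm g (ENNReal.ofReal r) volume).toReal, c, hc, ?_⟩
  intro t ht ht1
  have hbound : ∀ᵐ x : ℝ, ‖S t x‖ ≤ ‖((C₁ * t ^ c) • g) x‖ := by
    have hx0 : ∀ᵐ x : ℝ, x ≠ (0:ℝ) := by
      rw [ae_iff]
      simp only [ne_eq, not_not]
      have : {x : ℝ | x = 0} = {0} := by ext; simp
      rw [this]
      exact measure_singleton 0
    filter_upwards [hx0] with x hx
    have hgx : 0 ≤ g x := by
      simp only [hgdef]; split <;> exact Real.rpow_nonneg (abs_nonneg x) _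
    rw [Real.norm_eq_abs, Real.norm_eq_abs, Pi.smul_apply, smul_eq_mul,
      abs_of_nonneg (mul_nonneg (mul_nonneg hC₁ (Real.rpow_nonneg ht.le _)) hgx)]
    by_cases hx1 : |x| ≤ 1
    · have hk := key δ₀ hδ₀.le le_rfl t ht x hx
      simp only [hgdef, if_pos hx1]
      rw [hcdef]
      exact hk
    · have hk := key 0 le_rfl hδ₀.le t ht x hx
      simp only [hgdef, if_neg hx1]
      have h2 : t ^ (1 / (α + 1) * (1 - α / p - 0)) ≤ t ^ c := by
        apply Real.rpow_le_rpow_of_exponent_ge ht ht1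
        rw [hcdef]
        refine mul_le_mul_of_nonneg_left (by linarith) (by positivity)
      calc |S t x| ≤ C₁ * t ^ (1 / (α + 1) * (1 - α / p - 0)) * |x| ^ ((0:ℝ) - 1) := hk
        _ ≤ C₁ * t ^ c * |x| ^ ((0:ℝ) - 1) := by
            refine mul_le_mul_of_nonneg_right (mul_le_mul_of_nonneg_left h2 hC₁) ?_
            exact Real.rpow_nonneg (abs_nonneg x) _
        _ = C₁ * t ^ c * |x| ^ (-1 : ℝ) := by norm_num
  calc eLpNorm (S t) (ENNReal.ofReal r) volume
      ≤ eLpNorm ((C₁ * t ^ c) • g) (ENNReal.ofReal r) volume := eLpNorm_mono_ae hbound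
    _ = ↑‖C₁ * t ^ c‖₊ * eLpNorm g (ENNReal.ofReal r) volume := eLpNorm_const_smul _ _ _ _
    _ ≤ ENNReal.ofReal (C₁ * (eLpNorm g (ENNReal.ofReal r) volume).toReal * t ^ c) := by
        have hnn : 0 ≤ C₁ * t ^ c := mul_nonneg hC₁ (Real.rpow_nonneg ht.le _)
        rw [← enorm_eq_nnnorm, Real.enorm_eq_ofReal hnn]
        conv_lhs => rw [(ENNReal.ofReal_toReal hmem.2.ne).symm]
        rw [← ENNReal.ofReal_mul hnn]
        exact ENNReal.ofReal_le_ofReal (le_of_eq (by ring))
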